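/- arXiv:2001.02405 — 4 statements merged into one kernel-verified Lean document; each statement's English description precedes it below -/
import Mathlib

section
/- Let s = σ + it ∈ ℂ with 0 < σ < 1 and |t| ≥ 1, and let ε > 0 be real. Then Π_ε(s)/(1+2ε) < Π_0(s) < (1 + ε²/(1+ε))·Π_ε(s). -/
/-!
Pairing each term with its conjugate, `Π_ε(s) = 2(1+2ε)·B/(B²+V)` with
`B = σ(1-σ) + t² + ε + ε²` and `V = t²(2σ-1)²`, so `Π_0(s) = 2A/(A²+V)` for `A = σ(1-σ) + t²`.
When `|t| ≥ 1` we have `V < A ≤ A²`, and `x ↦ x/(x²+V)` is decreasing on `x² > V`; this gives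
the left inequality. The right one combines `A/(A²+V) ≤ (1+B-A)·B/(B²+V)` with
`1 + ε + ε² < (1 + ε²/(1+ε))(1+2ε)`.
-/

/-- The pairing function `Π_ε(s) = 1/(s+ε) + 1/(s̄+ε) + 1/(1−s+ε) + 1/(1−s̄+ε)`;
for real `ε` it is real, so we record its real part. -/
noncomputable def pairingFn (ε : ℝ) (s : ℂ) : ℝ :=
  ((s + ε)⁻¹ + ((starRingEnd ℂ) s + ε)⁻¹ + (1 - s + ε)⁻¹ +
    (1 - (starRingEnd ℂ) s + ε)⁻¹).re

lemma re_inv_add_inv_conj (z : ℂ) :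
    (z⁻¹ + (starRingEnd ℂ z)⁻¹).re = 2 * z.re / Complex.normSq z := by
  simp only [Complex.add_re, Complex.inv_re, Complex.conj_re, Complex.normSq_conj]
  ring

lemma pairingFn_eq_add (ε : ℝ) (s : ℂ) :
    pairingFn ε s = 2 * (s.re + ε) / ((s.re + ε) ^ 2 + s.im ^ 2) +
      2 * (1 - s.re + ε) / ((1 - s.re + ε) ^ 2 + s.im ^ 2) := by
  have hconj : starRingEnd ℂ s + ε = starRingEnd ℂ (s + ε) := by simp
  have hconj' : 1 - starRingEnd ℂ s + ε = starRingEnd ℂ (1 - s + ε) := by simp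
  rw [pairingFn, hconj, hconj', add_assoc, Complex.add_re,
    re_inv_add_inv_conj, re_inv_add_inv_conj]
  simp [Complex.normSq_apply, sq]

lemma two_mul_div_add_two_mul_div {a b t : ℝ} (ht : t ≠ 0) :
    2 * a / (a ^ 2 + t ^ 2) + 2 * b / (b ^ 2 + t ^ 2) =
      2 * (a + b) * (a * b + t ^ 2) / ((a * b + t ^ 2) ^ 2 + t ^ 2 * (a - b) ^ 2) := by
  have ha : a ^ 2 + t ^ 2 ≠ 0 := by positivity
  have hb : b ^ 2 + t ^ 2 ≠ 0 := by positivity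
  have hab : (a * b + t ^ 2) ^ 2 + t ^ 2 * (a - b) ^ 2 = (a ^ 2 + t ^ 2) * (b ^ 2 + t ^ 2) := by
    ring
  rw [hab, div_add_div _ _ ha hb]
  congr 1
  ring

lemma pairingFn_eq (ε : ℝ) (s : ℂ) (him : s.im ≠ 0) :
    pairingFn ε s = (1 + 2 * ε) * (2 * ((s.re * (1 - s.re) + s.im ^ 2 + (ε + ε ^ 2)) /
      ((s.re * (1 - s.re) + s.im ^ 2 + (ε + ε ^ 2)) ^ 2 + s.im ^ 2 * (2 * s.re - 1) ^ 2))) := by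
  rw [pairingFn_eq_add, two_mul_div_add_two_mul_div him]
  ring_nf

lemma im_sq_mul_lt_re_mul_one_sub_re_add_im_sq (s : ℂ) (hσ0 : 0 < s.re) (hσ1 : s.re < 1)
    (him : s.im ≠ 0) : s.im ^ 2 * (2 * s.re - 1) ^ 2 < s.re * (1 - s.re) + s.im ^ 2 := by
  have hσ : 0 < s.re * (1 - s.re) := mul_pos hσ0 (by linarith)
  have hσ' : (2 * s.re - 1) ^ 2 < 1 := by nlinarith
  have ht : 0 < s.im ^ 2 := by positivity
  nlinarith

lemma div_sq_add_lt_div_sq_add {a b v : ℝ} (ha : 0 < a) (hab : a < b) (hv : 0 ≤ v)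
    (hvab : v < a * b) : b / (b ^ 2 + v) < a / (a ^ 2 + v) := by
  have hb : 0 < b := ha.trans hab
  rw [div_lt_div_iff₀ (by positivity) (by positivity)]
  nlinarith [mul_pos (sub_pos.2 hab) (sub_pos.2 hvab)]

lemma div_sq_add_le_mul_div_sq_add {a b v : ℝ} (ha : 1 ≤ a) (hab : a ≤ b) (hv : 0 ≤ v) :
    a / (a ^ 2 + v) ≤ (1 + (b - a)) * (b / (b ^ 2 + v)) := by
  have ha0 : 0 < a := by linarith
  have hb : 0 < b := by linarith
  rw [mul_div_assoc', div_le_div_iff₀ (by positivity) (by positivity)]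
  nlinarith [mul_nonneg (sub_nonneg.2 hab) (mul_nonneg (sub_nonneg.2 ha) (by linarith : 0 ≤ a)),
    mul_nonneg (sub_nonneg.2 hab) hv,
    mul_nonneg (mul_nonneg (sub_nonneg.2 hab) hv) (by linarith : 0 ≤ b)]

lemma one_add_add_sq_lt_mul (ε : ℝ) (hε : 0 < ε) :
    1 + (ε + ε ^ 2) < (1 + ε ^ 2 / (1 + ε)) * (1 + 2 * ε) := by
  have h : 1 + ε ^ 2 / (1 + ε) = (1 + ε + ε ^ 2) / (1 + ε) := by field_simp
  rw [h, div_mul_eq_mul_div, lt_div_iff₀ (by positivity)]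
  nlinarith [mul_pos hε (by positivity : 0 < 1 + ε + ε ^ 2)]

/-- for `s = σ + it` with `0 < σ < 1`, `|t| ≥ 1`, and real `ε > 0`,
`Π_ε(s)/(1+2ε) < Π_0(s) < (1 + ε²/(1+ε))·Π_ε(s)`. -/
theorem pairing_ineq_R1 (s : ℂ) (hσ0 : 0 < s.re) (hσ1 : s.re < 1)
    (ht : 1 ≤ |s.im|) (ε : ℝ) (hε : 0 < ε) :
    pairingFn ε s / (1 + 2 * ε) < pairingFn 0 s ∧
      pairingFn 0 s < (1 + ε ^ 2 / (1 + ε)) * pairingFn ε s := by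
  have ht2 : 1 ≤ s.im ^ 2 := by nlinarith [sq_abs s.im, abs_nonneg s.im]
  have him : s.im ≠ 0 := by rintro h; norm_num [h] at ht2
  have hVA := im_sq_mul_lt_re_mul_one_sub_re_add_im_sq s hσ0 hσ1 him
  set A := s.re * (1 - s.re) + s.im ^ 2
  set V := s.im ^ 2 * (2 * s.re - 1) ^ 2
  set B := A + (ε + ε ^ 2)
  have hA : 1 ≤ A := by nlinarith
  have hAB : A < B := by simp only [B]; nlinarith
  have hV : 0 ≤ V := by positivity
  have hP0 : pairingFn 0 s = 2 * (A / (A ^ 2 + V)) := by simp [pairingFn_eq 0 s him, A, V]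
  have hPε : pairingFn ε s = (1 + 2 * ε) * (2 * (B / (B ^ 2 + V))) := pairingFn_eq ε s him
  constructor
  · rw [hPε, hP0, mul_div_cancel_left₀ _ (by positivity)]
    linarith [div_sq_add_lt_div_sq_add (by linarith) hAB hV (by nlinarith)]
  · have hfB : 0 < B / (B ^ 2 + V) := div_pos (by linarith) (by positivity)
    have hle := div_sq_add_le_mul_div_sq_add hA hAB.le hV
    rw [add_sub_cancel_left] at hle
    calc pairingFn 0 s ≤ 2 * ((1 + (ε + ε ^ 2)) * (B / (B ^ 2 + V))) := by linarith
      _ < 2 * ((1 + ε ^ 2 / (1 + ε)) * (1 + 2 * ε) * (B / (B ^ 2 + V))) := by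
        gcongr
        exact one_add_add_sq_lt_mul ε hε
      _ = (1 + ε ^ 2 / (1 + ε)) * pairingFn ε s := by rw [hPε]; ring
end

section
/- Let q ≥ 2 be an integer and F ≥ 2 a real number. Let s = σ + it ∈ ℂ satisfy 0 < σ(1−σ) < (1/F)·(1 − 1/F) and 1 − 1/√(F·log(q)) ≤ |t| < 1, and let ε be a real number with ε ≥ 2/√(F·log(q)). Then Π_ε(s)/(1+2ε) < Π_0(s) < (1 + 70·ε²/(1+ε))·Π_ε(s). -/
private lemma Gnn (u ρ ε : ℝ) (hu0 : 0 ≤ u) (hu2 : u ≤ 1/2) (hρ0 : 0 ≤ ρ)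
    (hρ1 : ρ ≤ 1) (hε : 2*(1-ρ) ≤ ε) :
    (1-2*u)*((1-u)^2+ρ^2)*((1-u+ε)^2+ρ^2) ≤
      ((1-u)^2+ε*(1-u)+ρ^2*(2*(1-u)-1)+2*(1-u)*((1-u)+ε)^2)*((u+ε)^2+ρ^2) := by
  have hw : (0:ℝ) ≤ 1-ρ := by linarith
  have ha : (0:ℝ) ≤ ε-2*(1-ρ) := by linarith
  have hh : (0:ℝ) ≤ 1/2-u := by linarith
  have t0 : (0:ℝ) ≤ (ε-2*(1-ρ))*(ε-2*(1-ρ))*(ε-2*(1-ρ))*(ε-2*(1-ρ)) := (mul_nonneg (mul_nonneg (mul_nonneg ha ha) ha) ha)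
  have t1 : (0:ℝ) ≤ (ε-2*(1-ρ))*(ε-2*(1-ρ))*(ε-2*(1-ρ))*(ε-2*(1-ρ))*(1/2-u) := (mul_nonneg (mul_nonneg (mul_nonneg (mul_nonneg ha ha) ha) ha) hh)
  have t2 : (0:ℝ) ≤ (ε-2*(1-ρ))*(ε-2*(1-ρ))*(ε-2*(1-ρ))*(1/2-u) := (mul_nonneg (mul_nonneg (mul_nonneg ha ha) ha) hh)
  have t3 : (0:ℝ) ≤ (ε-2*(1-ρ))*(ε-2*(1-ρ))*ρ*ρ := (mul_nonneg (mul_nonneg (mul_nonneg ha ha) hρ0) hρ0)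
  have t4 : (0:ℝ) ≤ (ε-2*(1-ρ))*(ε-2*(1-ρ))*(1/2-u) := (mul_nonneg (mul_nonneg ha ha) hh)
  have t5 : (0:ℝ) ≤ (ε-2*(1-ρ))*ρ*ρ := (mul_nonneg (mul_nonneg ha hρ0) hρ0)
  have t6 : (0:ℝ) ≤ u*(ε-2*(1-ρ))*(ε-2*(1-ρ))*(ε-2*(1-ρ))*ρ := (mul_nonneg (mul_nonneg (mul_nonneg (mul_nonneg hu0 ha) ha) ha) hρ0)
  have t7 : (0:ℝ) ≤ u*(ε-2*(1-ρ))*(ε-2*(1-ρ))*(1/2-u) := (mul_nonneg (mul_nonneg (mul_nonneg hu0 ha) ha) hh)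
  have t8 : (0:ℝ) ≤ u*(ε-2*(1-ρ))*(ε-2*(1-ρ))*(1/2-u)*(1/2-u) := (mul_nonneg (mul_nonneg (mul_nonneg (mul_nonneg hu0 ha) ha) hh) hh)
  have t9 : (0:ℝ) ≤ u*(ε-2*(1-ρ))*ρ := (mul_nonneg (mul_nonneg hu0 ha) hρ0)
  have t10 : (0:ℝ) ≤ u*(ε-2*(1-ρ))*(1/2-u) := (mul_nonneg (mul_nonneg hu0 ha) hh)
  have t11 : (0:ℝ) ≤ u*(ε-2*(1-ρ))*(1/2-u)*(1/2-u) := (mul_nonneg (mul_nonneg (mul_nonneg hu0 ha) hh) hh)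
  have t12 : (0:ℝ) ≤ u*ρ := (mul_nonneg hu0 hρ0)
  have t13 : (0:ℝ) ≤ u*(1/2-u)*(1/2-u) := (mul_nonneg (mul_nonneg hu0 hh) hh)
  have t14 : (0:ℝ) ≤ u*u*(1/2-u)*ρ := (mul_nonneg (mul_nonneg (mul_nonneg hu0 hu0) hh) hρ0)
  have t15 : (0:ℝ) ≤ u*u*u*(ε-2*(1-ρ))*(1/2-u) := (mul_nonneg (mul_nonneg (mul_nonneg (mul_nonneg hu0 hu0) hu0) ha) hh)
  have t16 : (0:ℝ) ≤ u*u*u*(1/2-u) := (mul_nonneg (mul_nonneg (mul_nonneg hu0 hu0) hu0) hh)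
  have t17 : (0:ℝ) ≤ u*u*u*u*ρ := (mul_nonneg (mul_nonneg (mul_nonneg (mul_nonneg hu0 hu0) hu0) hu0) hρ0)
  have t18 : (0:ℝ) ≤ u*u*u*(1-ρ)*(ε-2*(1-ρ)) := (mul_nonneg (mul_nonneg (mul_nonneg (mul_nonneg hu0 hu0) hu0) hw) ha)
  have t19 : (0:ℝ) ≤ u*u*u*(1-ρ)*(1-ρ) := (mul_nonneg (mul_nonneg (mul_nonneg (mul_nonneg hu0 hu0) hu0) hw) hw)
  have t20 : (0:ℝ) ≤ u*u*(1-ρ)*(ε-2*(1-ρ))*ρ := (mul_nonneg (mul_nonneg (mul_nonneg (mul_nonneg hu0 hu0) hw) ha) hρ0)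
  have t21 : (0:ℝ) ≤ u*u*(1-ρ)*ρ := (mul_nonneg (mul_nonneg (mul_nonneg hu0 hu0) hw) hρ0)
  have t22 : (0:ℝ) ≤ u*u*(1-ρ)*(1-ρ)*ρ := (mul_nonneg (mul_nonneg (mul_nonneg (mul_nonneg hu0 hu0) hw) hw) hρ0)
  have t23 : (0:ℝ) ≤ u*(1-ρ)*(ε-2*(1-ρ))*(ε-2*(1-ρ))*ρ := (mul_nonneg (mul_nonneg (mul_nonneg (mul_nonneg hu0 hw) ha) ha) hρ0)
  have t24 : (0:ℝ) ≤ u*(1-ρ)*(ε-2*(1-ρ))*ρ := (mul_nonneg (mul_nonneg (mul_nonneg hu0 hw) ha) hρ0)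
  have t25 : (0:ℝ) ≤ u*(1-ρ)*(ε-2*(1-ρ))*(1/2-u) := (mul_nonneg (mul_nonneg (mul_nonneg hu0 hw) ha) hh)
  have t26 : (0:ℝ) ≤ u*(1-ρ)*(1/2-u) := (mul_nonneg (mul_nonneg hu0 hw) hh)
  have t27 : (0:ℝ) ≤ u*(1-ρ)*(1/2-u)*(1/2-u) := (mul_nonneg (mul_nonneg (mul_nonneg hu0 hw) hh) hh)
  have t28 : (0:ℝ) ≤ u*(1-ρ)*(1-ρ)*(ε-2*(1-ρ))*ρ := (mul_nonneg (mul_nonneg (mul_nonneg (mul_nonneg hu0 hw) hw) ha) hρ0)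
  have t29 : (0:ℝ) ≤ u*(1-ρ)*(1-ρ)*ρ := (mul_nonneg (mul_nonneg (mul_nonneg hu0 hw) hw) hρ0)
  have t30 : (0:ℝ) ≤ u*(1-ρ)*(1-ρ)*(1/2-u) := (mul_nonneg (mul_nonneg (mul_nonneg hu0 hw) hw) hh)
  have t31 : (0:ℝ) ≤ u*(1-ρ)*(1-ρ)*(1-ρ)*ρ := (mul_nonneg (mul_nonneg (mul_nonneg (mul_nonneg hu0 hw) hw) hw) hρ0)
  have t32 : (0:ℝ) ≤ (1-ρ)*(ε-2*(1-ρ))*(ε-2*(1-ρ))*(ε-2*(1-ρ)) := (mul_nonneg (mul_nonneg (mul_nonneg hw ha) ha) ha)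
  have t33 : (0:ℝ) ≤ (1-ρ)*(ε-2*(1-ρ))*(ε-2*(1-ρ))*(ε-2*(1-ρ))*(1/2-u) := (mul_nonneg (mul_nonneg (mul_nonneg (mul_nonneg hw ha) ha) ha) hh)
  have t34 : (0:ℝ) ≤ (1-ρ)*(ε-2*(1-ρ))*(ε-2*(1-ρ))*(1/2-u) := (mul_nonneg (mul_nonneg (mul_nonneg hw ha) ha) hh)
  have t35 : (0:ℝ) ≤ (1-ρ)*(ε-2*(1-ρ))*ρ*ρ := (mul_nonneg (mul_nonneg (mul_nonneg hw ha) hρ0) hρ0)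
  have t36 : (0:ℝ) ≤ (1-ρ)*(ε-2*(1-ρ))*(1/2-u) := (mul_nonneg (mul_nonneg hw ha) hh)
  have t37 : (0:ℝ) ≤ (1-ρ)*(1-ρ)*(ε-2*(1-ρ))*(ε-2*(1-ρ)) := (mul_nonneg (mul_nonneg (mul_nonneg hw hw) ha) ha)
  have t38 : (0:ℝ) ≤ (1-ρ)*(1-ρ)*(ε-2*(1-ρ))*(ε-2*(1-ρ))*(1/2-u) := (mul_nonneg (mul_nonneg (mul_nonneg (mul_nonneg hw hw) ha) ha) hh)
  have t39 : (0:ℝ) ≤ (1-ρ)*(1-ρ)*(ε-2*(1-ρ))*(1/2-u) := (mul_nonneg (mul_nonneg (mul_nonneg hw hw) ha) hh)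
  have t40 : (0:ℝ) ≤ (1-ρ)*(1-ρ)*(1/2-u) := (mul_nonneg (mul_nonneg hw hw) hh)
  have t41 : (0:ℝ) ≤ (1-ρ)*(1-ρ)*(1-ρ) := (mul_nonneg (mul_nonneg hw hw) hw)
  have t42 : (0:ℝ) ≤ (1-ρ)*(1-ρ)*(1-ρ)*(ε-2*(1-ρ)) := (mul_nonneg (mul_nonneg (mul_nonneg hw hw) hw) ha)
  have t43 : (0:ℝ) ≤ (1-ρ)*(1-ρ)*(1-ρ)*(1/2-u) := (mul_nonneg (mul_nonneg (mul_nonneg hw hw) hw) hh)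
  have t44 : (0:ℝ) ≤ (1-ρ)*(1-ρ)*(1-ρ)*(1-ρ) := (mul_nonneg (mul_nonneg (mul_nonneg hw hw) hw) hw)
  linarith [t0, t1, t2, t3, t4, t5, t6, t7, t8, t9, t10, t11, t12, t13, t14, t15, t16, t17, t18, t19, t20, t21, t22, t23, t24, t25, t26, t27, t28, t29, t30, t31, t32, t33, t34, t35, t36, t37, t38, t39, t40, t41, t42, t43, t44]

private lemma ineq1R (u ρ ε : ℝ) (hu0 : 0 < u) (hu2 : u ≤ 1/2) (hρ0 : 0 < ρ)
    (hρ1 : ρ < 1) (hε2 : 2*(1-ρ) ≤ ε) (hε0 : 0 < ε) :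
    (u+ε)/((u+ε)^2+ρ^2) + (1-u+ε)/((1-u+ε)^2+ρ^2)
      < (1+2*ε)*(u/(u^2+ρ^2) + (1-u)/((1-u)^2+ρ^2)) := by
  have hDu : (0:ℝ) < u^2+ρ^2 := by positivity
  have hDu' : (0:ℝ) < (u+ε)^2+ρ^2 := by positivity
  have hDv : (0:ℝ) < (1-u)^2+ρ^2 := by positivity
  have hDv' : (0:ℝ) < (1-u+ε)^2+ρ^2 := by positivity
  have key1 : (1-2*u)/((u+ε)^2+ρ^2)
      ≤ ((1-u)^2+ε*(1-u)+ρ^2*(2*(1-u)-1)+2*(1-u)*((1-u)+ε)^2)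
          /(((1-u)^2+ρ^2)*((1-u+ε)^2+ρ^2)) := by
    rw [div_le_div_iff₀ hDu' (mul_pos hDv hDv')]
    nlinarith [Gnn u ρ ε hu0.le hu2 hρ0.le hρ1.le hε2]
  have hpos : 0 < (u^2+ε*u+ρ^2*(2*u-1)+2*u*(u+ε)^2) + (1-2*u)*(u^2+ρ^2) := by
    nlinarith [mul_pos hε0 hu0, mul_nonneg hu0.le (sq_nonneg (u+ε)),
      mul_nonneg (mul_nonneg hu0.le hu0.le) (show (0:ℝ) ≤ 1-2*u by linarith), sq_nonneg u]
  have key2 : -((1-2*u)/((u+ε)^2+ρ^2))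
      < (u^2+ε*u+ρ^2*(2*u-1)+2*u*(u+ε)^2)/((u^2+ρ^2)*((u+ε)^2+ρ^2)) := by
    rw [← neg_div, div_lt_div_iff₀ hDu' (mul_pos hDu hDu')]
    nlinarith [mul_pos hpos hDu']
  have identity : (1+2*ε)*(u/(u^2+ρ^2) + (1-u)/((1-u)^2+ρ^2))
      - ((u+ε)/((u+ε)^2+ρ^2) + (1-u+ε)/((1-u+ε)^2+ρ^2))
      = ε*((u^2+ε*u+ρ^2*(2*u-1)+2*u*(u+ε)^2)/((u^2+ρ^2)*((u+ε)^2+ρ^2))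
          + ((1-u)^2+ε*(1-u)+ρ^2*(2*(1-u)-1)+2*(1-u)*((1-u)+ε)^2)
              /(((1-u)^2+ρ^2)*((1-u+ε)^2+ρ^2))) := by
    field_simp
    ring
  have hS : 0 < (u^2+ε*u+ρ^2*(2*u-1)+2*u*(u+ε)^2)/((u^2+ρ^2)*((u+ε)^2+ρ^2))
      + ((1-u)^2+ε*(1-u)+ρ^2*(2*(1-u)-1)+2*(1-u)*((1-u)+ε)^2)
          /(((1-u)^2+ρ^2)*((1-u+ε)^2+ρ^2)) := by
    linarith [key1, key2]
  nlinarith [mul_pos hε0 hS, identity]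

private lemma term2R (x ρ ε : ℝ) (hx : 0 < x) (hρ : 3/20 < ρ) (hε0 : 0 < ε) :
    (x*(x+ε)-ρ^2)/((x^2+ρ^2)*((x+ε)^2+ρ^2)) < (10/3*(x+ε))/((x+ε)^2+ρ^2) := by
  have hD : (0:ℝ) < x^2+ρ^2 := by positivity
  have hD' : (0:ℝ) < (x+ε)^2+ρ^2 := by positivity
  rw [div_lt_div_iff₀ (mul_pos hD hD') hD']
  have hgap : 0 < 10/3*(x^2+ρ^2) - x := by nlinarith [sq_nonneg (x-3/20)]
  nlinarith [mul_pos (mul_pos (add_pos hx hε0) hgap) hD', mul_nonneg (sq_nonneg ρ) hD'.le]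

set_option maxHeartbeats 1000000 in
private lemma ineq2R (u ρ ε : ℝ) (hu0 : 0 < u) (hu2 : u ≤ 1/2) (hρ0 : 3/20 < ρ)
    (hρ1 : ρ < 1) (hε2 : 2*(1-ρ) ≤ ε) (hε0 : 0 < ε) :
    u/(u^2+ρ^2) + (1-u)/((1-u)^2+ρ^2)
      < (1+70*ε^2/(1+ε))*((u+ε)/((u+ε)^2+ρ^2) + (1-u+ε)/((1-u+ε)^2+ρ^2)) := by
  have hDu : (0:ℝ) < u^2+ρ^2 := by positivity
  have hDu' : (0:ℝ) < (u+ε)^2+ρ^2 := by positivity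
  have hDv : (0:ℝ) < (1-u)^2+ρ^2 := by positivity
  have hDv' : (0:ℝ) < (1-u+ε)^2+ρ^2 := by positivity
  have hε1 : (0:ℝ) < 1+ε := by linarith
  have hfε : 0 < (u+ε)/((u+ε)^2+ρ^2) + (1-u+ε)/((1-u+ε)^2+ρ^2) :=
    add_pos (div_pos (by linarith) hDu') (div_pos (by linarith) hDv')
  have identity : (u/(u^2+ρ^2) + (1-u)/((1-u)^2+ρ^2))
      - ((u+ε)/((u+ε)^2+ρ^2) + (1-u+ε)/((1-u+ε)^2+ρ^2))
      = ε*((u*(u+ε)-ρ^2)/((u^2+ρ^2)*((u+ε)^2+ρ^2))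
          + ((1-u)*((1-u)+ε)-ρ^2)/(((1-u)^2+ρ^2)*((1-u+ε)^2+ρ^2))) := by
    field_simp
    ring
  rcases le_or_gt (1/20 : ℝ) ε with hc | hc
  · have t1 := term2R u ρ ε hu0 hρ0 hε0
    have t2 := term2R (1-u) ρ ε (by linarith) hρ0 hε0
    have hsum := mul_lt_mul_of_pos_left (add_lt_add t1 t2) hε0
    have hfac : ε*(10/3) ≤ 70*ε^2/(1+ε) := by
      rw [le_div_iff₀ hε1]; nlinarith
    have hstep : ε*((10/3*(u+ε))/((u+ε)^2+ρ^2) + (10/3*(1-u+ε))/((1-u+ε)^2+ρ^2))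
        ≤ (70*ε^2/(1+ε))*((u+ε)/((u+ε)^2+ρ^2) + (1-u+ε)/((1-u+ε)^2+ρ^2)) := by
      have e1 : ε*((10/3*(u+ε))/((u+ε)^2+ρ^2) + (10/3*(1-u+ε))/((1-u+ε)^2+ρ^2))
          = (ε*(10/3))*((u+ε)/((u+ε)^2+ρ^2) + (1-u+ε)/((1-u+ε)^2+ρ^2)) := by
        ring
      rw [e1]
      exact mul_le_mul_of_nonneg_right hfac hfε.le
    linarith [identity, hsum, hstep]
  · have hρb : (39/40 : ℝ) ≤ ρ := by linarith
    have hMu : u*(u+ε)-ρ^2 < 0 := by nlinarith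
    have hTu : ε*((u*(u+ε)-ρ^2)/((u^2+ρ^2)*((u+ε)^2+ρ^2))) < 0 :=
      mul_neg_of_pos_of_neg hε0 (div_neg_of_neg_of_pos hMu (mul_pos hDu hDu'))
    have hMv : (1-u)*((1-u)+ε)-ρ^2 ≤ 2*ε := by nlinarith
    have hvε : (1/2 : ℝ) ≤ (1-u)+ε := by linarith
    have hDvb : (6/5 : ℝ) ≤ (1-u)^2+ρ^2 := by nlinarith
    have h42 : 2*(1+ε) ≤ 70*(((1-u)+ε)*((1-u)^2+ρ^2)) := by
      have := mul_le_mul hvε hDvb (by norm_num) (by linarith : (0:ℝ) ≤ (1-u)+ε)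
      linarith
    have hstep : ε*(((1-u)*((1-u)+ε)-ρ^2)/(((1-u)^2+ρ^2)*((1-u+ε)^2+ρ^2)))
        ≤ (70*ε^2/(1+ε))*((1-u+ε)/((1-u+ε)^2+ρ^2)) := by
      rw [← mul_div_assoc, div_mul_div_comm,
        div_le_div_iff₀ (mul_pos hDv hDv') (mul_pos hε1 hDv')]
      have A1 : ε*((1-u)*((1-u)+ε)-ρ^2)*((1+ε)*((1-u+ε)^2+ρ^2))
          ≤ ε*(2*ε)*((1+ε)*((1-u+ε)^2+ρ^2)) :=
        mul_le_mul_of_nonneg_right (mul_le_mul_of_nonneg_left hMv hε0.le)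
          (mul_nonneg hε1.le hDv'.le)
      have A2 := mul_le_mul_of_nonneg_right h42
        (mul_nonneg (mul_nonneg hε0.le hε0.le) hDv'.le)
      nlinarith [A1, A2]
    have hKterm : 0 ≤ (70*ε^2/(1+ε))*((u+ε)/((u+ε)^2+ρ^2)) :=
      mul_nonneg (by positivity) (div_nonneg (by linarith) hDu'.le)
    linarith [identity, hTu, hstep, hKterm]

private lemma pairing_eq (ε : ℝ) (s : ℂ) :
    pairingFn ε s = 2*((s.re+ε)/((s.re+ε)^2+s.im^2))
      + 2*((1-s.re+ε)/((1-s.re+ε)^2+s.im^2)) := by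
  simp only [pairingFn, Complex.add_re, Complex.add_im, Complex.sub_re, Complex.sub_im,
    Complex.one_re, Complex.one_im, Complex.ofReal_re, Complex.ofReal_im,
    Complex.conj_re, Complex.conj_im, Complex.inv_re, Complex.inv_im,
    Complex.normSq_apply]
  ring

/-- for an integer `q ≥ 2`, a real `F ≥ 2`, `s = σ + it` with
`0 < σ(1−σ) < (1/F)(1 − 1/F)` and `1 − 1/√(F·log q) ≤ |t| < 1`, and a real
`ε ≥ 2/√(F·log q)`, one has `Π_ε(s)/(1+2ε) < Π_0(s) < (1 + 70ε²/(1+ε))·Π_ε(s)`. -/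
theorem pairing_ineq_R2 (q : ℕ) (hq : 2 ≤ q) (F : ℝ) (hF : 2 ≤ F) (s : ℂ)
    (hσ0 : 0 < s.re * (1 - s.re))
    (hσ1 : s.re * (1 - s.re) < (1 / F) * (1 - 1 / F))
    (ht0 : 1 - 1 / Real.sqrt (F * Real.log q) ≤ |s.im|) (ht1 : |s.im| < 1)
    (ε : ℝ) (hε : 2 / Real.sqrt (F * Real.log q) ≤ ε) :
    pairingFn ε s / (1 + 2 * ε) < pairingFn 0 s ∧
      pairingFn 0 s < (1 + 70 * ε ^ 2 / (1 + ε)) * pairingFn ε s := by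
  have hσl : 0 < s.re := by nlinarith
  have hσr : s.re < 1 := by nlinarith
  have h2q : (2:ℝ) ≤ (q:ℝ) := by exact_mod_cast hq
  have hlog2 : Real.log 2 ≤ Real.log q := Real.log_le_log (by norm_num) h2q
  have hlogq : 0 < Real.log q := lt_of_lt_of_le (Real.log_pos (by norm_num)) hlog2
  have hFlog : (400/289 : ℝ) < F * Real.log q := by
    nlinarith [Real.log_two_gt_d9, hF, hlogq, hlog2]
  have hsq : (20/17 : ℝ) < Real.sqrt (F * Real.log q) := by
    rw [show (20/17 : ℝ) = Real.sqrt ((20/17)^2) from (Real.sqrt_sq (by norm_num)).symm]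
    exact Real.sqrt_lt_sqrt (by positivity) (by norm_num; linarith)
  have hsqpos : 0 < Real.sqrt (F * Real.log q) := by linarith
  have hδ : 1 / Real.sqrt (F * Real.log q) < 17/20 := by
    rw [div_lt_iff₀ hsqpos]; nlinarith
  have hρ3 : (3/20 : ℝ) < |s.im| := by linarith
  have hρ0 : (0:ℝ) < |s.im| := by linarith
  have hε0 : 0 < ε := by
    have : 0 < 2 / Real.sqrt (F * Real.log q) := by positivity
    linarith
  have hε2 : 2*(1-|s.im|) ≤ ε := by
    have h1 : 1 - |s.im| ≤ 1 / Real.sqrt (F * Real.log q) := by linarith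
    have h2 : 2*(1 / Real.sqrt (F * Real.log q)) = 2 / Real.sqrt (F * Real.log q) := by
      ring
    linarith
  have habs : |s.im|^2 = s.im^2 := sq_abs _
  have h12 : (0:ℝ) < 1 + 2*ε := by linarith
  rcases le_or_gt s.re (1/2) with hcase | hcase
  · have h1 := ineq1R s.re |s.im| ε hσl hcase hρ0 ht1 hε2 hε0
    have h2 := ineq2R s.re |s.im| ε hσl hcase hρ3 ht1 hε2 hε0
    rw [habs] at h1 h2
    constructor
    · rw [div_lt_iff₀ h12, pairing_eq, pairing_eq]
      norm_num
      linarith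
    · rw [pairing_eq, pairing_eq]
      norm_num
      linarith
  · have h1 := ineq1R (1-s.re) |s.im| ε (by linarith) (by linarith) hρ0 ht1 hε2 hε0
    have h2 := ineq2R (1-s.re) |s.im| ε (by linarith) (by linarith) hρ3 ht1 hε2 hε0
    rw [show (1:ℝ)-(1-s.re) = s.re from by ring] at h1 h2
    rw [habs] at h1 h2
    constructor
    · rw [div_lt_iff₀ h12, pairing_eq, pairing_eq]
      norm_num
      linarith
    · rw [pairing_eq, pairing_eq]
      norm_num
      linarith
end

section
/- Let f : ℤ_{≥2} → ℝ be a function and A > 0 a constant with 2 ≤ f(q) ≤ A·log(q) for all q ≥ 2, and set ε(q) := 2/√(f(q)·log(q)). Then there exists a constant C > 0 (depending only on A) such that for every integer q ≥ 2 and every s = σ + it ∈ ℂ with 0 < σ < 1 lying in R₁ ∪ R₂ ∪ R₃, where R₁ = { |t| ≥ 1 }, R₂ = { 0 < σ(1−σ) < (1/f(q))(1 − 1/f(q)), 1 − 1/√(f(q)log(q)) ≤ |t| < 1 }, and R₃ = { 1/f(q) ≤ σ ≤ 1 − 1/f(q), |t| < 1 }, one has |Π_0(s) − Π_{ε(q)}(s)|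 ≤ C·√(f(q)/log(q))·Π_{ε(q)}(s). -/
noncomputable def pairingTerm (x t : ℝ) : ℝ :=
  2 * x / (x ^ 2 + t ^ 2)

lemma pairingFn_eq_pairingTerm (ε : ℝ) (s : ℂ) :
    pairingFn ε s = pairingTerm (s.re + ε) s.im + pairingTerm (1 - s.re + ε) s.im := by
  simp only [pairingFn, pairingTerm, Complex.add_re, Complex.inv_re, Complex.normSq_apply,
    Complex.sub_re, Complex.one_re, Complex.conj_re, Complex.conj_im, Complex.add_im,
    Complex.sub_im, Complex.one_im, Complex.ofReal_re, Complex.ofReal_im]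
  ring

lemma pairingFn_zero_sub_pairingFn (ε : ℝ) (s : ℂ) :
    pairingFn 0 s - pairingFn ε s =
      (pairingTerm s.re s.im - pairingTerm (s.re + ε) s.im) +
        (pairingTerm (1 - s.re) s.im - pairingTerm (1 - s.re + ε) s.im) := by
  rw [pairingFn_eq_pairingTerm, pairingFn_eq_pairingTerm, add_zero, add_zero]
  ring

lemma pairingTerm_nonneg {x : ℝ} (hx : 0 ≤ x) (t : ℝ) : 0 ≤ pairingTerm x t := by
  unfold pairingTerm; positivity

lemma pairingFn_nonneg {s : ℂ} (hσ₀ : 0 ≤ s.re) (hσ₁ : s.re ≤ 1) {ε : ℝ} (hε : 0 ≤ ε) :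
    0 ≤ pairingFn ε s := by
  rw [pairingFn_eq_pairingTerm]
  exact add_nonneg (pairingTerm_nonneg (by linarith) _) (pairingTerm_nonneg (by linarith) _)

lemma pairingTerm_sub_pairingTerm_add {x t : ℝ} (ε : ℝ) (h₁ : x ^ 2 + t ^ 2 ≠ 0)
    (h₂ : (x + ε) ^ 2 + t ^ 2 ≠ 0) :
    pairingTerm x t - pairingTerm (x + ε) t =
      2 * ε * (x * (x + ε) - t ^ 2) / ((x ^ 2 + t ^ 2) * ((x + ε) ^ 2 + t ^ 2)) := by
  unfold pairingTerm
  field_simp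
  ring

lemma abs_pairingTerm_sub_pairingTerm_add_le_of_pos {x ε : ℝ} (hx : 0 < x) (hε : 0 ≤ ε)
    (t : ℝ) :
    |pairingTerm x t - pairingTerm (x + ε) t| ≤ ε / x * pairingTerm (x + ε) t := by
  have hD₁ : 0 < x ^ 2 + t ^ 2 := by positivity
  have hD₂ : 0 < (x + ε) ^ 2 + t ^ 2 := by positivity
  rw [pairingTerm_sub_pairingTerm_add ε hD₁.ne' hD₂.ne', abs_div,
    abs_of_pos (mul_pos hD₁ hD₂), div_le_iff₀ (mul_pos hD₁ hD₂)]
  have hnum : |2 * ε * (x * (x + ε) - t ^ 2)| ≤ 2 * ε * (x * (x + ε) + t ^ 2) := by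
    have hxx : 0 ≤ x * (x + ε) := by positivity
    rw [abs_le]
    constructor <;> nlinarith [mul_nonneg hε (sq_nonneg t), mul_nonneg hε hxx]
  calc |2 * ε * (x * (x + ε) - t ^ 2)| ≤ 2 * ε * (x * (x + ε) + t ^ 2) := hnum
    _ ≤ 2 * ε * (x + ε) * (x ^ 2 + t ^ 2) / x := by
      rw [le_div_iff₀ hx]
      nlinarith [mul_nonneg (mul_nonneg hε hε) (sq_nonneg t)]
    _ = ε / x * pairingTerm (x + ε) t * ((x ^ 2 + t ^ 2) * ((x + ε) ^ 2 + t ^ 2)) := by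
      unfold pairingTerm
      field_simp

lemma abs_pairingTerm_sub_pairingTerm_add_le {x ε t : ℝ} (hx₀ : 0 ≤ x) (hx₁ : x ≤ 1)
    (hε₀ : 0 ≤ ε) (hε₂ : ε ≤ 2) (ht : t ≠ 0) :
    |pairingTerm x t - pairingTerm (x + ε) t| ≤ 2 * ε * (3 + t ^ 2) / t ^ 4 := by
  have ht₂ : 0 < t ^ 2 := by positivity
  have hD₁ : t ^ 2 ≤ x ^ 2 + t ^ 2 := le_add_of_nonneg_left (sq_nonneg x)
  have hD₂ : t ^ 2 ≤ (x + ε) ^ 2 + t ^ 2 := le_add_of_nonneg_left (sq_nonneg (x + ε))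
  have hD₁₀ : 0 < x ^ 2 + t ^ 2 := ht₂.trans_le hD₁
  have hD₂₀ : 0 < (x + ε) ^ 2 + t ^ 2 := ht₂.trans_le hD₂
  rw [pairingTerm_sub_pairingTerm_add ε hD₁₀.ne' hD₂₀.ne', abs_div,
    abs_of_pos (mul_pos hD₁₀ hD₂₀)]
  have hnum : |2 * ε * (x * (x + ε) - t ^ 2)| ≤ 2 * ε * (3 + t ^ 2) := by
    have hprod : x * (x + ε) ≤ 3 := by nlinarith
    rw [abs_le]
    constructor <;> nlinarith [mul_nonneg hε₀ (mul_nonneg hx₀ (add_nonneg hx₀ hε₀)),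
      mul_nonneg hε₀ ht₂.le, mul_nonneg hε₀ (sub_nonneg.2 hprod)]
  calc |2 * ε * (x * (x + ε) - t ^ 2)| / ((x ^ 2 + t ^ 2) * ((x + ε) ^ 2 + t ^ 2))
      ≤ 2 * ε * (3 + t ^ 2) / (t ^ 2 * t ^ 2) :=
        div_le_div₀ (by positivity) hnum (by positivity)
          (mul_le_mul hD₁ hD₂ ht₂.le hD₁₀.le)
    _ = 2 * ε * (3 + t ^ 2) / t ^ 4 := by ring

lemma inv_nine_add_sq_le_pairingTerm_add {y ε : ℝ} (hy₀ : 1 / 2 ≤ y) (hy₁ : y ≤ 1)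
    (hε₀ : 0 ≤ ε) (hε₂ : ε ≤ 2) (t : ℝ) :
    1 / (9 + t ^ 2) ≤ pairingTerm (y + ε) t := by
  unfold pairingTerm
  rw [div_le_div_iff₀ (by positivity) (by positivity)]
  nlinarith [mul_nonneg (by linarith : 0 ≤ 2 * (y + ε) - 1) (sq_nonneg t)]

lemma inv_nine_add_sq_le_pairingFn {s : ℂ} (hσ₀ : 0 < s.re) (hσ₁ : s.re < 1) {ε : ℝ}
    (hε₀ : 0 ≤ ε) (hε₂ : ε ≤ 2) :
    1 / (9 + s.im ^ 2) ≤ pairingFn ε s := by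
  rw [pairingFn_eq_pairingTerm]
  rcases le_total s.re (1 / 2) with hσ | hσ
  · have := inv_nine_add_sq_le_pairingTerm_add (y := 1 - s.re) (by linarith) (by linarith)
      hε₀ hε₂ s.im
    linarith [pairingTerm_nonneg (by linarith : 0 ≤ s.re + ε) s.im]
  · have := inv_nine_add_sq_le_pairingTerm_add hσ hσ₁.le hε₀ hε₂ s.im
    linarith [pairingTerm_nonneg (by linarith : 0 ≤ 1 - s.re + ε) s.im]

lemma abs_pairingFn_zero_sub_le_of_le_re {s : ℂ} {δ ε : ℝ} (hδ : 0 < δ) (hε : 0 ≤ ε)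
    (hσ₀ : δ ≤ s.re) (hσ₁ : s.re ≤ 1 - δ) :
    |pairingFn 0 s - pairingFn ε s| ≤ ε / δ * pairingFn ε s := by
  have h₁ := abs_pairingTerm_sub_pairingTerm_add_le_of_pos (hδ.trans_le hσ₀) hε s.im
  have h₂ := abs_pairingTerm_sub_pairingTerm_add_le_of_pos
    (by linarith : 0 < 1 - s.re) hε s.im
  have hw₁ : ε / s.re ≤ ε / δ := div_le_div_of_nonneg_left hε hδ hσ₀
  have hw₂ : ε / (1 - s.re) ≤ ε / δ := div_le_div_of_nonneg_left hε hδ (by linarith)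
  have hP₁ := pairingTerm_nonneg (by linarith : 0 ≤ s.re + ε) s.im
  have hP₂ := pairingTerm_nonneg (by linarith : 0 ≤ 1 - s.re + ε) s.im
  rw [pairingFn_zero_sub_pairingFn, pairingFn_eq_pairingTerm, mul_add]
  calc _ ≤ ε / s.re * pairingTerm (s.re + ε) s.im +
        ε / (1 - s.re) * pairingTerm (1 - s.re + ε) s.im :=
        (abs_add_le _ _).trans (add_le_add h₁ h₂)
    _ ≤ _ := by gcongr

lemma abs_pairingFn_zero_sub_le_of_le_abs_im {s : ℂ} (hσ₀ : 0 < s.re) (hσ₁ : s.re < 1)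
    (ht : 1 / 8 ≤ |s.im|) {ε : ℝ} (hε₀ : 0 ≤ ε) (hε₂ : ε ≤ 2) :
    |pairingFn 0 s - pairingFn ε s| ≤ 500000 * ε * pairingFn ε s := by
  set t := s.im
  have ht₂ : 1 / 64 ≤ t ^ 2 := by rw [← sq_abs]; nlinarith
  have ht₀ : t ≠ 0 := abs_pos.1 (by linarith)
  have h₁ := abs_pairingTerm_sub_pairingTerm_add_le hσ₀.le hσ₁.le hε₀ hε₂ ht₀
  have h₂ := abs_pairingTerm_sub_pairingTerm_add_le (by linarith : 0 ≤ 1 - s.re)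
    (by linarith) hε₀ hε₂ ht₀
  have hdecay : 4 * ε * (3 + t ^ 2) / t ^ 4 ≤ 500000 * ε * (1 / (9 + t ^ 2)) := by
    rw [← mul_div_assoc, mul_one, div_le_div_iff₀ (by positivity) (by positivity)]
    -- the worst case is `t ^ 2 = 1 / 64`, where the left side is about `445000 * t ^ 4`
    have : 4 * (3 + t ^ 2) * (9 + t ^ 2) ≤ 500000 * t ^ 4 := by nlinarith
    nlinarith [mul_le_mul_of_nonneg_left this hε₀]
  calc _ ≤ 4 * ε * (3 + t ^ 2) / t ^ 4 := by
        rw [pairingFn_zero_sub_pairingFn]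
        exact (abs_add_le _ _).trans ((add_le_add h₁ h₂).trans_eq (by ring))
    _ ≤ 500000 * ε * (1 / (9 + t ^ 2)) := hdecay
    _ ≤ _ := by
      gcongr
      exact inv_nine_add_sq_le_pairingFn hσ₀ hσ₁ hε₀ hε₂

lemma sqrt_div_eq_div_sqrt_mul {F : ℝ} (hF : 0 ≤ F) (L : ℝ) : √(F / L) = F / √(F * L) := by
  rw [Real.sqrt_div hF, Real.sqrt_mul hF, ← div_div, Real.div_sqrt]

theorem pairing_close_on_regions_general (A : ℝ) :
    ∃ C > 0, ∀ f : ℕ → ℝ, (∀ q : ℕ, 2 ≤ q → 2 ≤ f q ∧ f q ≤ A * Real.log q) →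
      ∀ q : ℕ, 2 ≤ q → ∀ s : ℂ, 0 < s.re → s.re < 1 →
        ((1 ≤ |s.im|) ∨
          (0 < s.re * (1 - s.re) ∧
            s.re * (1 - s.re) < (1 / f q) * (1 - 1 / f q) ∧
            1 - 1 / Real.sqrt (f q * Real.log q) ≤ |s.im| ∧ |s.im| < 1) ∨
          (1 / f q ≤ s.re ∧ s.re ≤ 1 - 1 / f q ∧ |s.im| < 1)) →
        |pairingFn 0 s - pairingFn (2 / Real.sqrt (f q * Real.log q)) s| ≤
          C * Real.sqrt (f q / Real.log q) *
            pairingFn (2 / Real.sqrt (f q * Real.log q)) s := by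
  refine ⟨500000, by norm_num, fun f hf q hq s hσ₀ hσ₁ hs => ?_⟩
  have hF : 2 ≤ f q := (hf q hq).1
  have hFL : 64 / 49 ≤ f q * Real.log q := by
    have : 0.69 < Real.log q := Real.log_two_gt_d9.trans_le' (by norm_num) |>.trans_le
      (Real.log_le_log two_pos (by exact_mod_cast hq))
    nlinarith
  rw [sqrt_div_eq_div_sqrt_mul (by linarith)]
  set E := √(f q * Real.log q)
  have hE : 8 / 7 ≤ E := Real.le_sqrt_of_sq_le (by linarith)
  have hε₀ : 0 ≤ 2 / E := by positivity
  have hε₂ : 2 / E ≤ 2 := div_le_self (by norm_num) (by linarith)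
  have hP : 0 ≤ pairingFn (2 / E) s := pairingFn_nonneg hσ₀.le hσ₁.le hε₀
  have hS : 0 ≤ f q / E := div_nonneg (by linarith) (by positivity)
  have hregion : 1 / 8 ≤ |s.im| ∨ (1 / f q ≤ s.re ∧ s.re ≤ 1 - 1 / f q) := by
    rcases hs with ht | ⟨-, -, ht, -⟩ | ⟨hσ, hσ', -⟩
    · exact Or.inl (by linarith)
    · have : 1 / E ≤ 7 / 8 := by rw [div_le_iff₀ (by positivity)]; linarith
      exact Or.inl (by linarith)
    · exact Or.inr ⟨hσ, hσ'⟩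
  rcases hregion with ht | ⟨hσ, hσ'⟩
  · calc _ ≤ 500000 * (2 / E) * pairingFn (2 / E) s :=
          abs_pairingFn_zero_sub_le_of_le_abs_im hσ₀ hσ₁ ht hε₀ hε₂
      _ ≤ 500000 * (f q / E) * pairingFn (2 / E) s := by gcongr
  · calc _ ≤ 2 / E / (1 / f q) * pairingFn (2 / E) s :=
          abs_pairingFn_zero_sub_le_of_le_re (by positivity) hε₀ hσ hσ'
      _ = 2 * (f q / E) * pairingFn (2 / E) s := by field_simp
      _ ≤ 500000 * (f q / E) * pairingFn (2 / E) s := by gcongr; norm_num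

/-- if `2 ≤ f(q) ≤ A·log q` and `ε(q) = 2/√(f(q)·log q)`, then uniformly
for `s` in `R₁ ∪ R₂ ∪ R₃` (subsets of the critical strip depending on `q` via `f`),
`|Π_0(s) − Π_{ε(q)}(s)| ≤ C·√(f(q)/log q)·Π_{ε(q)}(s)`, with `C` depending only
on `A`. -/
theorem pairing_close_on_regions (A : ℝ) (hA : 0 < A) :
    ∃ C > 0, ∀ f : ℕ → ℝ, (∀ q : ℕ, 2 ≤ q → 2 ≤ f q ∧ f q ≤ A * Real.log q) →
      ∀ q : ℕ, 2 ≤ q → ∀ s : ℂ, 0 < s.re → s.re < 1 →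
        ((1 ≤ |s.im|) ∨
          (0 < s.re * (1 - s.re) ∧
            s.re * (1 - s.re) < (1 / f q) * (1 - 1 / f q) ∧
            1 - 1 / Real.sqrt (f q * Real.log q) ≤ |s.im| ∧ |s.im| < 1) ∨
          (1 / f q ≤ s.re ∧ s.re ≤ 1 - 1 / f q ∧ |s.im| < 1)) →
        |pairingFn 0 s - pairingFn (2 / Real.sqrt (f q * Real.log q)) s| ≤
          C * Real.sqrt (f q / Real.log q) *
            pairingFn (2 / Real.sqrt (f q * Real.log q)) s :=
  pairing_close_on_regions_general A
end

section
/- Let (q_n)_{n≥1} be a sequence of integers with q_n ≥ 3 tending to infinity such that log(P(q_n)) = o(log(q_n)) as n → ∞, where P(m) denotes the largest prime factor of m. For each n write q′_n := ∏_{p | q_n} p (the radical of q_n) and K_n := log(q_n)/log(q′_n). Then (log(q′_n)·log(2·K_n)) / log(log(q′_n)) = o(log(q_n)) as n → ∞. -/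
open Filter Asymptotics Real

/-!
Write `u = log q′` and `v = log q`, so that `1/2 < u ≤ v`, and note that `|log u|` stays away
from `0` because `q′ ≥ 2` is an integer. If `log u` is large, `u log (2v/u) ≤ 2v` makes the
quotient a small multiple of `v`. Otherwise `u` is bounded and the quotient is `O(log v) = o(v)`.
-/

lemma one_div_twelve_le_abs_log_log_natCast {m : ℕ} (hm : 2 ≤ m) :
    1 / 12 ≤ |log (log m)| := by
  rcases hm.eq_or_lt with rfl | hm3
  · have hlog2 : 0 < log (2 : ℕ) := log_pos (by norm_num)
    have hloglog := log_le_sub_one_of_pos hlog2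
    push_cast at hlog2 hloglog ⊢
    calc (1 / 12 : ℝ) ≤ -log (log 2) := by linarith [log_two_lt_d9]
      _ ≤ |log (log 2)| := neg_le_abs _
  · have hlog3 : log 3 ≤ log m := log_le_log (by norm_num) (by exact_mod_cast hm3)
    have hlogm : 1.0986 ≤ log m := by linarith [log_three_gt_d9]
    -- `log x ≥ 1 - 1/x`, from `log (1/x) ≤ 1/x - 1`
    have hinv := log_le_sub_one_of_pos (inv_pos.2 (by linarith : (0 : ℝ) < log m))
    rw [log_inv] at hinv
    have hinv_le : (log m)⁻¹ ≤ (1.0986 : ℝ)⁻¹ := inv_anti₀ (by norm_num) hlogm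
    exact le_abs.2 (Or.inl (by norm_num at hinv_le ⊢; linarith))

lemma two_le_prod_primeFactors {n : ℕ} (hn : 2 ≤ n) : 2 ≤ ∏ p ∈ n.primeFactors, p := by
  obtain ⟨p, hp⟩ := Nat.nonempty_primeFactors.2 hn
  have hprod_pos : 0 < ∏ p ∈ n.primeFactors, p :=
    Finset.prod_pos fun p hp => (Nat.prime_of_mem_primeFactors hp).pos
  exact (Nat.prime_of_mem_primeFactors hp).two_le.trans
    (Nat.le_of_dvd hprod_pos (Finset.dvd_prod_of_mem _ hp))

section RealBounds

variable {u v : ℝ}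

lemma log_two_mul_div_nonneg (hu : 0 < u) (huv : u ≤ v) : 0 ≤ log (2 * (v / u)) :=
  log_nonneg (by linarith [(one_le_div hu).2 huv])

lemma mul_log_two_mul_div_le (hu : 0 < u) (huv : u ≤ v) : u * log (2 * (v / u)) ≤ 2 * v :=
  calc u * log (2 * (v / u)) ≤ u * (2 * (v / u)) := by
        gcongr; exact log_le_self (by have := hu.trans_le huv; positivity)
    _ = 2 * v := by field_simp

lemma log_two_mul_div_le_log_four_mul (hu : 1 / 2 ≤ u) (huv : u ≤ v) :
    log (2 * (v / u)) ≤ log (4 * v) := by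
  have hu0 : 0 < u := by linarith
  refine log_le_log (by have := hu0.trans_le huv; positivity) ?_
  rw [mul_div_assoc', div_le_iff₀ hu0]
  nlinarith

end RealBounds

lemma eventually_const_mul_log_four_mul_le (C : ℝ) {ε : ℝ} (hε : 0 < ε) :
    ∀ᶠ v in atTop, C * log (4 * v) ≤ ε * v := by
  have hlog : (fun v => C * log (4 * v)) =o[atTop] id :=
    ((isLittleO_log_id_atTop.comp_tendsto (tendsto_id.const_mul_atTop four_pos)).trans_isBigO
      ((isBigO_refl id atTop).const_mul_left 4)).const_mul_left C
  filter_upwards [hlog.bound hε, eventually_ge_atTop 0] with v hv hv0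
  simpa [abs_of_nonneg hv0] using (le_abs_self _).trans hv

lemma eventually_forall_norm_mul_log_two_mul_div_div_log_le {c ε : ℝ} (hc : 0 < c)
    (hε : 0 < ε) :
    ∀ᶠ v in atTop, ∀ u, 1 / 2 ≤ u → u ≤ v → c ≤ |log u| →
      ‖u * log (2 * (v / u)) / log u‖ ≤ ε * v := by
  filter_upwards [eventually_const_mul_log_four_mul_le (exp (2 / ε) / c) hε]
    with v hv u hu huv hcu
  have hu0 : 0 < u := by linarith
  have hnum : 0 ≤ u * log (2 * (v / u)) := mul_nonneg hu0.le (log_two_mul_div_nonneg hu0 huv)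
  rw [norm_div, norm_of_nonneg hnum, norm_eq_abs]
  by_cases hlarge : 2 / ε ≤ log u
  · calc u * log (2 * (v / u)) / |log u| ≤ 2 * v / (2 / ε) :=
          div_le_div₀ (by linarith) (mul_log_two_mul_div_le hu0 huv) (by positivity)
            (hlarge.trans (le_abs_self _))
      _ = ε * v := by field_simp
  · have huM : u ≤ exp (2 / ε) := by
      rw [← exp_log hu0]
      exact exp_le_exp.2 (not_le.1 hlarge).le
    calc u * log (2 * (v / u)) / |log u| ≤ u * log (2 * (v / u)) / c :=
          div_le_div_of_nonneg_left hnum hc hcu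
      _ ≤ exp (2 / ε) * log (4 * v) / c := by
          gcongr ?_ / c
          exact mul_le_mul huM (log_two_mul_div_le_log_four_mul hu huv)
            (log_two_mul_div_nonneg hu0 huv) (exp_pos _).le
      _ = exp (2 / ε) / c * log (4 * v) := by ring
      _ ≤ ε * v := hv

theorem chang_factor_isLittleO_of_smooth_general (q : ℕ → ℕ)
    (hq : Tendsto q atTop atTop) :
    (fun n => Real.log (∏ p ∈ (q n).primeFactors, p) *
        Real.log (2 * (Real.log (q n) / Real.log (∏ p ∈ (q n).primeFactors, p))) /
        Real.log (Real.log (∏ p ∈ (q n).primeFactors, p)))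
      =o[atTop] fun n => Real.log (q n) := by
  have hlogq : Tendsto (fun n => log (q n)) atTop atTop :=
    tendsto_log_atTop.comp (tendsto_natCast_atTop_atTop.comp hq)
  refine isLittleO_iff.2 fun ε hε => ?_
  filter_upwards [hlogq.eventually
      (eventually_forall_norm_mul_log_two_mul_div_div_log_le (by norm_num : (0 : ℝ) < 1 / 12) hε),
    hq.eventually_ge_atTop 2] with n hbound hn
  have hrad := two_le_prod_primeFactors hn
  rw [← Nat.cast_prod, norm_of_nonneg (log_natCast_nonneg _)]
  refine hbound _ ?_ ?_ (one_div_twelve_le_abs_log_log_natCast hrad)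
  · calc (1 / 2 : ℝ) ≤ log 2 := by linarith [log_two_gt_d9]
      _ ≤ _ := log_le_log (by norm_num) (by exact_mod_cast hrad)
  · exact log_le_log (by exact_mod_cast (by omega : 0 < ∏ p ∈ (q n).primeFactors, p))
      (by exact_mod_cast Nat.le_of_dvd (by omega) (Nat.prod_primeFactors_dvd _))

/-- if `(q_n)` is a sequence of integers `≥ 3` tending to infinity with
`log P(q_n) = o(log q_n)`, where `P(m)` is the largest prime factor of `m`, then with
`q′_n = ∏_{p ∣ q_n} p` (the radical) and `K_n = log(q_n)/log(q′_n)`, one has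
`log(q′_n)·log(2K_n)/log(log(q′_n)) = o(log q_n)` as `n → ∞`. -/
theorem chang_factor_isLittleO_of_smooth (q : ℕ → ℕ) (hq3 : ∀ n, 3 ≤ q n)
    (hq : Tendsto q atTop atTop)
    (hsmooth : (fun n => Real.log (((q n).primeFactors.sup id : ℕ) : ℝ)) =o[atTop]
      fun n => Real.log (q n)) :
    (fun n => Real.log (∏ p ∈ (q n).primeFactors, p) *
        Real.log (2 * (Real.log (q n) / Real.log (∏ p ∈ (q n).primeFactors, p))) /
        Real.log (Real.log (∏ p ∈ (q n).primeFactors, p)))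
      =o[atTop] fun n => Real.log (q n) :=
  chang_factor_isLittleO_of_smooth_general q hq
end
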